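/- In the monoid M_n (n ≥ 1), every word in normal form with respect to the complete rewriting system has the property that every letter occurring after the last occurrence of d is the letter a. -/
import Mathlib


inductive Letter | a | b | c | d | z
deriving DecidableEq

/-- The rewriting rules for `M n`: `aⁿb→z`, `ac→1`, `db→1`, `dc→1`,
`daᵏb→1` for `1 ≤ k ≤ n-1`, and `xz→z`, `zx→z` for every letter `x`. -/
def Rule (n : ℕ) : List Letter → List Letter → Prop := fun l r =>
  (l = List.replicate n .a ++ [.b] ∧ r = [.z]) ∨
  (l = [.a, .c] ∧ r = []) ∨ (l = [.d, .b] ∧ r = []) ∨ (l = [.d, .c] ∧ r = []) ∨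
  (∃ k, 1 ≤ k ∧ k ≤ n - 1 ∧ l = .d :: (List.replicate k .a ++ [.b]) ∧ r = []) ∨
  (∃ x : Letter, l = [x, .z] ∧ r = [.z]) ∨ (∃ x : Letter, l = [.z, x] ∧ r = [.z])

/-- One-step rewriting: replace a factor equal to a left-hand side by the right-hand side. -/
def Step (n : ℕ) (x y : List Letter) : Prop :=
  ∃ p s l r, Rule n l r ∧ x = p ++ l ++ s ∧ y = p ++ r ++ s

lemma first_nona (l : List Letter) (h : ∃ x ∈ l, x ≠ Letter.a) :
    ∃ k x t, x ≠ Letter.a ∧ l = List.replicate k .a ++ x :: t := by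
  induction l with
  | nil => simp at h
  | cons y ys ih =>
    by_cases hy : y = Letter.a
    · subst hy
      obtain ⟨x, hx, hxa⟩ := h
      simp at hx
      rcases hx with hx | hx
      · exact absurd hx hxa
      · obtain ⟨k, x, t, hxa', ht⟩ := ih ⟨x, hx, hxa⟩
        exact ⟨k + 1, x, t, hxa', by simp [List.replicate_succ, ht]⟩
    · exact ⟨0, y, ys, hy, by simp⟩

/-- In a normal-form word (other than `z` itself), every letter occurring after
the last occurrence of `d` is the letter `a`. -/
theorem stmt3 (n : ℕ) (hn : 1 ≤ n) (w w₁ w₂ : List Letter)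
    (hnf : ∀ y, ¬ Step n w y) (hw : w ≠ [.z])
    (hdecomp : w = w₁ ++ [.d] ++ w₂) (hd : Letter.d ∉ w₂) :
    ∀ x ∈ w₂, x = Letter.a := by
  by_contra hcon
  push_neg at hcon
  obtain ⟨k, x, t, hxa, ht⟩ := first_nona w₂ hcon
  subst ht
  subst hdecomp
  have hxd : x ≠ Letter.d := by
    intro h; subst h; exact hd (by simp)
  cases x with
  | a => exact hxa rfl
  | d => exact hxd rfl
  | z =>
    cases k with
    | zero =>
      exact hnf (w₁ ++ [.z] ++ t) ⟨w₁, t, [.d, .z], [.z],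
        Or.inr (Or.inr (Or.inr (Or.inr (Or.inr (Or.inl ⟨.d, rfl, rfl⟩))))), by simp, rfl⟩
    | succ k' =>
      refine hnf (w₁ ++ [.d] ++ List.replicate k' .a ++ [.z] ++ t)
        ⟨w₁ ++ [.d] ++ List.replicate k' .a, t, [.a, .z], [.z],
        Or.inr (Or.inr (Or.inr (Or.inr (Or.inr (Or.inl ⟨.a, rfl, rfl⟩))))), ?_, by simp⟩
      simp [List.replicate_succ']
  | c =>
    cases k with
    | zero =>
      exact hnf (w₁ ++ t) ⟨w₁, t, [.d, .c], [],
        Or.inr (Or.inr (Or.inr (Or.inl ⟨rfl, rfl⟩))), by simp, by simp⟩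
    | succ k' =>
      refine hnf (w₁ ++ [.d] ++ List.replicate k' .a ++ t)
        ⟨w₁ ++ [.d] ++ List.replicate k' .a, t, [.a, .c], [],
        Or.inr (Or.inl ⟨rfl, rfl⟩), ?_, by simp⟩
      simp [List.replicate_succ']
  | b =>
    rcases Nat.lt_or_ge k n with hk | hk
    · cases k with
      | zero =>
        exact hnf (w₁ ++ t) ⟨w₁, t, [.d, .b], [],
          Or.inr (Or.inr (Or.inl ⟨rfl, rfl⟩)), by simp, by simp⟩
      | succ k' =>
        refine hnf (w₁ ++ t) ⟨w₁, t, .d :: (List.replicate (k'+1) .a ++ [.b]), [],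
          Or.inr (Or.inr (Or.inr (Or.inr (Or.inl ⟨k'+1, Nat.succ_le_succ (Nat.zero_le _),
            Nat.le_sub_one_of_lt hk, rfl, rfl⟩)))), ?_, by simp⟩
        simp
    · refine hnf (w₁ ++ [.d] ++ List.replicate (k - n) .a ++ [.z] ++ t)
        ⟨w₁ ++ [.d] ++ List.replicate (k - n) .a, t, List.replicate n .a ++ [.b], [.z],
        Or.inl ⟨rfl, rfl⟩, ?_, by simp⟩
      have : List.replicate k Letter.a = List.replicate (k - n) Letter.a ++ List.replicate n Letter.a := by
        rw [← List.replicate_add, Nat.sub_add_cancel hk]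
      rw [this]; simp only [List.append_assoc, List.cons_append, List.singleton_append, List.nil_append]
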